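/- In PG(3,2), under the full stabilizer G_2 of the twisted cubic C, there are exactly 4 orbits of points, of sizes 3, 8, 1, and 3: the points of C; the 8 points outside the plane x_1 = x_2; the single point (0:1:1:0); and the 3 remaining points of the plane x_1 = x_2 lying on chords of C. -/
import Mathlib

open scoped LinearAlgebra.Projectivization

/-- The twisted cubic in `PG(3,2)`. -/
def twistedCubic2 : Set (ℙ (ZMod 2) (Fin 4 → ZMod 2)) :=
  {Projectivization.mk (ZMod 2) ![0, 0, 0, 1] (by decide),
   Projectivization.mk (ZMod 2) ![1, 1, 1, 1] (by decide),
   Projectivization.mk (ZMod 2) ![1, 0, 0, 0] (by decide)}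

/-- The orbit of a point of `PG(3,2)` under the full stabilizer `G₂` of the twisted
cubic in the group of projectivities of `PG(3,2)`. -/
def pointOrbit2 (p : ℙ (ZMod 2) (Fin 4 → ZMod 2)) : Set (ℙ (ZMod 2) (Fin 4 → ZMod 2)) :=
  {p' | ∃ g : (Fin 4 → ZMod 2) ≃ₗ[ZMod 2] (Fin 4 → ZMod 2),
    (Projectivization.map (g : (Fin 4 → ZMod 2) →ₗ[ZMod 2] (Fin 4 → ZMod 2)) g.injective
        '' twistedCubic2 = twistedCubic2) ∧
    Projectivization.map (g : (Fin 4 → ZMod 2) →ₗ[ZMod 2] (Fin 4 → ZMod 2)) g.injective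
      p = p'}

/-- Membership of a point of `PG(3,2)` in the plane `x₁ = x₂`. -/
def inPlane12 (p : ℙ (ZMod 2) (Fin 4 → ZMod 2)) : Prop :=
  p.submodule ≤ LinearMap.ker
    ((LinearMap.proj 1 : (Fin 4 → ZMod 2) →ₗ[ZMod 2] ZMod 2) - LinearMap.proj 2)

/-- The point `(0:1:1:0)` of `PG(3,2)`. -/
def pt0110 : ℙ (ZMod 2) (Fin 4 → ZMod 2) :=
  Projectivization.mk (ZMod 2) ![0, 1, 1, 0] (by decide)

namespace PG32Aux

open Projectivization Matrix

abbrev V2 : Type := Fin 4 → ZMod 2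

lemma units_eq_one (a : (ZMod 2)ˣ) : (a : ZMod 2) = 1 :=
  (by decide : ∀ x : ZMod 2, x ≠ 0 → x = 1) _ a.ne_zero

lemma mkk {v w : V2} (hv : v ≠ 0) (hw : w ≠ 0) :
    Projectivization.mk (ZMod 2) v hv = Projectivization.mk (ZMod 2) w hw ↔ v = w := by
  rw [mk_eq_mk_iff]
  constructor
  · rintro ⟨a, rfl⟩
    rw [Units.smul_def, units_eq_one, one_smul]
  · rintro rfl; exact ⟨1, one_smul _ _⟩

lemma exists_rep' (p : ℙ (ZMod 2) V2) : ∃ v hv, p = Projectivization.mk (ZMod 2) v hv := by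
  induction p using Projectivization.ind with | h v hv => exact ⟨v, hv, rfl⟩

/-- The action of a linear automorphism on the projective space. -/
def act (g : V2 ≃ₗ[ZMod 2] V2) : ℙ (ZMod 2) V2 → ℙ (ZMod 2) V2 :=
  Projectivization.map (g : V2 →ₗ[ZMod 2] V2) g.injective

/-- `g` stabilizes the twisted cubic. -/
def stab (g : V2 ≃ₗ[ZMod 2] V2) : Prop := act g '' twistedCubic2 = twistedCubic2

lemma mem_orbit {p p' : ℙ (ZMod 2) V2} :
    p' ∈ pointOrbit2 p ↔ ∃ g, stab g ∧ act g p = p' := Iff.rfl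

lemma act_mk (g : V2 ≃ₗ[ZMod 2] V2) (v : V2) (hv : v ≠ 0) :
    act g (Projectivization.mk (ZMod 2) v hv)
      = Projectivization.mk (ZMod 2) (g v) (fun h => hv (g.map_eq_zero_iff.mp h)) :=
  Projectivization.map_mk _ _ _ _

abbrev inS (v : V2) : Prop := v = ![0,0,0,1] ∨ v = ![1,1,1,1] ∨ v = ![1,0,0,0]

abbrev inCh (v : V2) : Prop := v = ![1,1,1,0] ∨ v = ![1,0,0,1] ∨ v = ![0,1,1,1]

lemma mem_C_mk (v : V2) (hv : v ≠ 0) :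
    Projectivization.mk (ZMod 2) v hv ∈ twistedCubic2 ↔ inS v := by
  simp only [twistedCubic2, Set.mem_insert_iff, Set.mem_singleton_iff, mkk]

lemma inPlane_mk (v : V2) (hv : v ≠ 0) :
    inPlane12 (Projectivization.mk (ZMod 2) v hv) ↔ v 1 = v 2 := by
  rw [inPlane12, submodule_mk, Submodule.span_singleton_le_iff_mem, LinearMap.mem_ker,
    LinearMap.sub_apply, LinearMap.proj_apply, LinearMap.proj_apply, sub_eq_zero]

/- decidable combinatorial facts -/

lemma d1 : ∀ x y z : V2, inS x → inS y → inS z → x ≠ y → x ≠ z → y ≠ z →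
    ∀ u : V2, inS u → (u = x ∨ u = y ∨ u = z) := by
  rintro x y z (rfl|rfl|rfl) (rfl|rfl|rfl) (rfl|rfl|rfl) hxy hxz hyz <;>
    first | (exact absurd rfl hxy) | (exact absurd rfl hxz) | (exact absurd rfl hyz) | decide

lemma d2 : ∀ x y z : V2, inS x → inS y → inS z → x ≠ y → x ≠ z → y ≠ z →
    x + y + z = ![0,1,1,0] := by
  rintro x y z (rfl|rfl|rfl) (rfl|rfl|rfl) (rfl|rfl|rfl) hxy hxz hyz <;>
    first | (exact absurd rfl hxy) | (exact absurd rfl hxz) | (exact absurd rfl hyz) | decide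

lemma d3 : ∀ v : V2, v 1 + v 2 = 0 →
    ∃ a b c : ZMod 2, v = a • ![0,0,0,1] + b • ![1,1,1,1] + c • ![1,0,0,0] := by decide

lemma d4 : ∀ x y : V2, inS x → inS y → x ≠ y →
    (x + y = ![1,1,1,0] ∨ x + y = ![1,0,0,1] ∨ x + y = ![0,1,1,1]) := by decide

lemma dS0 : ∀ v : V2, inS v → v 1 + v 2 = 0 := by decide

/- the stabilizer and its basic consequences -/

lemma inS_ne_zero {v : V2} (h : inS v) : v ≠ 0 := by
  rcases h with rfl | rfl | rfl <;> decide

lemma stab_inS {g : V2 ≃ₗ[ZMod 2] V2} (hg : stab g) : ∀ v, inS v → inS (g v) := by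
  intro v hv
  have h1 : Projectivization.mk (ZMod 2) v (inS_ne_zero hv) ∈ twistedCubic2 :=
    (mem_C_mk v _).2 hv
  have h2 := Set.mem_image_of_mem (act g) h1
  rw [hg, act_mk] at h2
  exact (mem_C_mk _ _).1 h2

lemma stab_surjS {g : V2 ≃ₗ[ZMod 2] V2} (hg : stab g) :
    ∀ v, inS v → ∃ u, inS u ∧ g u = v := by
  intro v hv
  have h1 : Projectivization.mk (ZMod 2) v (inS_ne_zero hv) ∈ twistedCubic2 :=
    (mem_C_mk v _).2 hv
  rw [← hg] at h1
  obtain ⟨q, hq, hq2⟩ := h1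
  obtain ⟨u, hu, rfl⟩ := exists_rep' q
  rw [act_mk, mkk] at hq2
  exact ⟨u, (mem_C_mk u hu).1 hq, hq2⟩

lemma stab_sum {g : V2 ≃ₗ[ZMod 2] V2} (hg : stab g) : g ![0,1,1,0] = ![0,1,1,0] := by
  have h : g ![0,1,1,0] = g ![0,0,0,1] + g ![1,1,1,1] + g ![1,0,0,0] := by
    rw [← map_add, ← map_add]
    exact congrArg g (by decide)
  rw [h]
  exact d2 _ _ _ (stab_inS hg _ (Or.inl rfl)) (stab_inS hg _ (Or.inr (Or.inl rfl)))
    (stab_inS hg _ (Or.inr (Or.inr rfl)))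
    (g.injective.ne (by decide)) (g.injective.ne (by decide)) (g.injective.ne (by decide))

lemma stab_chord {g : V2 ≃ₗ[ZMod 2] V2} (hg : stab g) : ∀ v, inCh v → inCh (g v) := by
  have h1 := stab_inS hg _ (Or.inl rfl)
  have h2 := stab_inS hg _ (Or.inr (Or.inl rfl))
  have h3 := stab_inS hg _ (Or.inr (Or.inr rfl))
  rintro v (rfl | rfl | rfl)
  · have h : (![1,1,1,0] : V2) = ![0,0,0,1] + ![1,1,1,1] := by decide
    rw [h, map_add]
    exact d4 _ _ h1 h2 (g.injective.ne (by decide))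
  · have h : (![1,0,0,1] : V2) = ![0,0,0,1] + ![1,0,0,0] := by decide
    rw [h, map_add]
    exact d4 _ _ h1 h3 (g.injective.ne (by decide))
  · have h : (![0,1,1,1] : V2) = ![1,1,1,1] + ![1,0,0,0] := by decide
    rw [h, map_add]
    exact d4 _ _ h2 h3 (g.injective.ne (by decide))

lemma f_pres (g : V2 ≃ₗ[ZMod 2] V2)
    (hS : ∀ v, inS v → inS (g v))
    (hSur : ∀ v, inS v → ∃ u, inS u ∧ g u = v) :
    ∀ v : V2, (g v) 1 + (g v) 2 = v 1 + v 2 := by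
  have hw : ∀ u, inS u → (g u) 1 + (g u) 2 = 0 := fun u hu => dS0 _ (hS u hu)
  have hplane : ∀ v : V2, v 1 + v 2 = 0 → (g v) 1 + (g v) 2 = 0 := by
    intro v hv
    obtain ⟨a, b, c, h⟩ := d3 v hv
    have e1 := hw ![0,0,0,1] (Or.inl rfl)
    have e2 := hw ![1,1,1,1] (Or.inr (Or.inl rfl))
    have e3 := hw ![1,0,0,0] (Or.inr (Or.inr rfl))
    rw [h, map_add, map_add, _root_.map_smul, _root_.map_smul, _root_.map_smul]
    simp only [Pi.add_apply, Pi.smul_apply, smul_eq_mul]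
    linear_combination a * e1 + b * e2 + c * e3
  have hga : (g ![0,1,0,0]) 1 + (g ![0,1,0,0]) 2 = 1 := by
    by_contra hne
    have h0 : (g ![0,1,0,0]) 1 + (g ![0,1,0,0]) 2 = 0 :=
      (by decide : ∀ x : ZMod 2, x ≠ 1 → x = 0) _ hne
    obtain ⟨a, b, c, hcomb⟩ := d3 _ h0
    obtain ⟨u1, hu1, hg1⟩ := hSur ![0,0,0,1] (Or.inl rfl)
    obtain ⟨u2, hu2, hg2⟩ := hSur ![1,1,1,1] (Or.inr (Or.inl rfl))
    obtain ⟨u3, hu3, hg3⟩ := hSur ![1,0,0,0] (Or.inr (Or.inr rfl))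
    rw [← hg1, ← hg2, ← hg3] at hcomb
    have heq : (![0,1,0,0] : V2) = a • u1 + b • u2 + c • u3 := by
      apply g.injective
      rw [hcomb, map_add, map_add, _root_.map_smul, _root_.map_smul, _root_.map_smul]
    have h1 := congrFun heq 1
    have h2 := congrFun heq 2
    simp only [Pi.add_apply, Pi.smul_apply, smul_eq_mul] at h1 h2
    have s1 := dS0 u1 hu1
    have s2 := dS0 u2 hu2
    have s3 := dS0 u3 hu3
    have : (1 : ZMod 2) = 0 := by
      have hv1 : (![0,1,0,0] : V2) 1 = 1 := rfl
      have hv2 : (![0,1,0,0] : V2) 2 = 0 := rfl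
      rw [hv1] at h1; rw [hv2] at h2
      linear_combination h1 + h2 + a * s1 + b * s2 + c * s3
    exact absurd this (by decide)
  intro v
  rcases (by decide : ∀ x : ZMod 2, x = 0 ∨ x = 1) (v 1 + v 2) with h | h
  · rw [h]; exact hplane v h
  · have hsplit : g v = g (v + ![0,1,0,0]) + g ![0,1,0,0] := by
      rw [← map_add, add_assoc, (by decide : (![0,1,0,0] : V2) + ![0,1,0,0] = 0), add_zero]
    have hvp : ((v + ![0,1,0,0] : V2)) 1 + ((v + ![0,1,0,0] : V2)) 2 = 0 := by
      simp only [Pi.add_apply]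
      have e : (![0,1,0,0] : V2) 1 = 1 := rfl
      have e2 : (![0,1,0,0] : V2) 2 = 0 := rfl
      rw [e, e2]
      have two : (2 : ZMod 2) = 0 := by decide
      linear_combination h + two
    have := hplane _ hvp
    rw [hsplit, h]
    simp only [Pi.add_apply]
    exact (by decide : ∀ a b c d : ZMod 2, a + b = 0 → c + d = 1 → a + c + (b + d) = 1)
      _ _ _ _ this hga

lemma f_pres' {g : V2 ≃ₗ[ZMod 2] V2} (hg : stab g) :
    ∀ v : V2, (g v) 1 + (g v) 2 = v 1 + v 2 :=
  f_pres g (stab_inS hg) (stab_surjS hg)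

/- group structure on the stabilizer -/

lemma act_act (g h : V2 ≃ₗ[ZMod 2] V2) (p : ℙ (ZMod 2) V2) :
    act h (act g p) = act (g.trans h) p := by
  obtain ⟨v, hv, rfl⟩ := exists_rep' p
  rw [act_mk, act_mk, act_mk]
  rfl

lemma act_refl (p : ℙ (ZMod 2) V2) : act (LinearEquiv.refl (ZMod 2) V2) p = p := by
  obtain ⟨v, hv, rfl⟩ := exists_rep' p
  rw [act_mk]
  rfl

lemma act_symm_act (g : V2 ≃ₗ[ZMod 2] V2) (p : ℙ (ZMod 2) V2) :
    act g.symm (act g p) = p := by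
  obtain ⟨v, hv, rfl⟩ := exists_rep' p
  rw [act_mk, act_mk]
  simp only [LinearEquiv.symm_apply_apply]

lemma stab_refl : stab (LinearEquiv.refl (ZMod 2) V2) := by
  unfold stab
  rw [show act (LinearEquiv.refl (ZMod 2) V2) = id from funext act_refl, Set.image_id]

lemma stab_trans {g h : V2 ≃ₗ[ZMod 2] V2} (hg : stab g) (hh : stab h) :
    stab (g.trans h) := by
  unfold stab at *
  rw [show act (g.trans h) = act h ∘ act g from funext fun p => (act_act g h p).symm,
    Set.image_comp, hg, hh]

lemma stab_symm {g : V2 ≃ₗ[ZMod 2] V2} (hg : stab g) : stab g.symm := by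
  unfold stab at *
  conv_lhs => rw [← hg]
  rw [← Set.image_comp, show act g.symm ∘ act g = id from funext fun p => act_symm_act g p,
    Set.image_id]

lemma orbit_congr {g : V2 ≃ₗ[ZMod 2] V2} (hg : stab g) (p : ℙ (ZMod 2) V2) :
    pointOrbit2 (act g p) = pointOrbit2 p := by
  ext r
  rw [mem_orbit, mem_orbit]
  constructor
  · rintro ⟨h, hh, rfl⟩
    exact ⟨g.trans h, stab_trans hg hh, (act_act g h p).symm⟩
  · rintro ⟨h, hh, rfl⟩
    refine ⟨g.symm.trans h, stab_trans (stab_symm hg) hh, ?_⟩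
    rw [← act_act, act_symm_act]

/- explicit stabilizing elements -/

def mkE (M N : Matrix (Fin 4) (Fin 4) (ZMod 2)) (h1 : M * N = 1) (h2 : N * M = 1) :
    V2 ≃ₗ[ZMod 2] V2 :=
  LinearEquiv.ofLinear M.mulVecLin N.mulVecLin
    (by rw [← Matrix.mulVecLin_mul, h1, Matrix.mulVecLin_one])
    (by rw [← Matrix.mulVecLin_mul, h2, Matrix.mulVecLin_one])

lemma mkE_apply (M N : Matrix (Fin 4) (Fin 4) (ZMod 2)) (h1 h2) (v : V2) :
    mkE M N h1 h2 v = M *ᵥ v := by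
  simp [mkE, Matrix.mulVecLin_apply]

lemma stab_of (g : V2 ≃ₗ[ZMod 2] V2) (h : ∀ v, inS v → inS (g v)) : stab g := by
  apply Set.Subset.antisymm
  · rintro r ⟨q, hq, rfl⟩
    obtain ⟨v, hv, rfl⟩ := exists_rep' q
    rw [act_mk]
    exact (mem_C_mk _ _).2 (h v ((mem_C_mk v hv).1 hq))
  · intro r hr
    obtain ⟨v, hv, rfl⟩ := exists_rep' r
    have hvS := (mem_C_mk v hv).1 hr
    have hd := d1 (g ![0,0,0,1]) (g ![1,1,1,1]) (g ![1,0,0,0])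
      (h _ (Or.inl rfl)) (h _ (Or.inr (Or.inl rfl))) (h _ (Or.inr (Or.inr rfl)))
      (g.injective.ne (by decide)) (g.injective.ne (by decide)) (g.injective.ne (by decide))
      v hvS
    rcases hd with h' | h' | h'
    · exact ⟨_, (mem_C_mk ![0,0,0,1] (by decide)).2 (Or.inl rfl),
        by rw [act_mk, mkk]; exact h'.symm⟩
    · exact ⟨_, (mem_C_mk ![1,1,1,1] (by decide)).2 (Or.inr (Or.inl rfl)),
        by rw [act_mk, mkk]; exact h'.symm⟩
    · exact ⟨_, (mem_C_mk ![1,0,0,0] (by decide)).2 (Or.inr (Or.inr rfl)),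
        by rw [act_mk, mkk]; exact h'.symm⟩

/-- the 3-cycle on the cubic -/
def Mc : Matrix (Fin 4) (Fin 4) (ZMod 2) := !![0,0,0,1; 0,1,0,1; 0,0,1,1; 1,0,0,1]
def Nc : Matrix (Fin 4) (Fin 4) (ZMod 2) := !![1,0,0,1; 1,1,0,0; 1,0,1,0; 1,0,0,0]

lemma McNc : Mc * Nc = 1 := by decide
lemma NcMc : Nc * Mc = 1 := by decide

def gC : V2 ≃ₗ[ZMod 2] V2 := mkE Mc Nc McNc NcMc
def gC2 : V2 ≃ₗ[ZMod 2] V2 := mkE Nc Mc NcMc McNc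

lemma stab_gC : stab gC :=
  stab_of _ fun v hv => by
    rw [gC, mkE_apply]
    exact (by decide : ∀ v : V2, inS v → inS (Mc *ᵥ v)) v hv

lemma stab_gC2 : stab gC2 :=
  stab_of _ fun v hv => by
    rw [gC2, mkE_apply]
    exact (by decide : ∀ v : V2, inS v → inS (Nc *ᵥ v)) v hv

/-- the transvection family moving points off the plane -/
def MA (a : V2) : Matrix (Fin 4) (Fin 4) (ZMod 2) :=
  Matrix.of fun i j =>
    if j = 0 then (if i = 0 then 1 else 0)
    else if j = 1 then a i
    else if j = 2 then a i + ![0,1,1,0] i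
    else (if i = 3 then 1 else 0)

lemma MA_sq : ∀ a : V2, a 1 ≠ a 2 → MA a * MA a = 1 := by decide

lemma MA_fix : ∀ a : V2, ∀ v : V2, inS v → MA a *ᵥ v = v := by decide

lemma MA_e1 : ∀ a : V2, MA a *ᵥ ![0,1,0,0] = a := by decide

def gA (a : V2) (ha : a 1 ≠ a 2) : V2 ≃ₗ[ZMod 2] V2 :=
  mkE (MA a) (MA a) (MA_sq a ha) (MA_sq a ha)

lemma stab_gA (a : V2) (ha : a 1 ≠ a 2) : stab (gA a ha) :=
  stab_of _ fun v hv => by rw [gA, mkE_apply, MA_fix a v hv]; exact hv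

/- reachability within each class -/

lemma reach_C (w : V2) (hw : w ≠ 0) (h : inS w) :
    ∃ g, stab g ∧ act g (Projectivization.mk (ZMod 2) ![0,0,0,1] (by decide))
      = Projectivization.mk (ZMod 2) w hw := by
  rcases h with rfl | rfl | rfl
  · exact ⟨LinearEquiv.refl _ _, stab_refl, act_refl _⟩
  · refine ⟨gC, stab_gC, ?_⟩
    rw [act_mk, mkk]
    rw [gC, mkE_apply]; decide
  · refine ⟨gC2, stab_gC2, ?_⟩
    rw [act_mk, mkk]
    rw [gC2, mkE_apply]; decide

lemma reach_out (w : V2) (hw : w ≠ 0) (h : w 1 ≠ w 2) :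
    ∃ g, stab g ∧ act g (Projectivization.mk (ZMod 2) ![0,1,0,0] (by decide))
      = Projectivization.mk (ZMod 2) w hw := by
  refine ⟨gA w h, stab_gA w h, ?_⟩
  rw [act_mk, mkk, gA, mkE_apply, MA_e1]

lemma reach_chord (w : V2) (hw : w ≠ 0) (h : inCh w) :
    ∃ g, stab g ∧ act g (Projectivization.mk (ZMod 2) ![1,1,1,0] (by decide))
      = Projectivization.mk (ZMod 2) w hw := by
  rcases h with rfl | rfl | rfl
  · exact ⟨LinearEquiv.refl _ _, stab_refl, act_refl _⟩
  · refine ⟨gC2, stab_gC2, ?_⟩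
    rw [act_mk, mkk, gC2, mkE_apply]; decide
  · refine ⟨gC, stab_gC, ?_⟩
    rw [act_mk, mkk, gC, mkE_apply]; decide

/- the four orbit lemmas -/

lemma chord_mk (v : V2) (hv : v ≠ 0) :
    (inPlane12 (Projectivization.mk (ZMod 2) v hv) ∧
      Projectivization.mk (ZMod 2) v hv ∉ twistedCubic2 ∧
      Projectivization.mk (ZMod 2) v hv ≠ pt0110) ↔ inCh v := by
  rw [inPlane_mk, mem_C_mk, pt0110, Ne, mkk]
  exact (by decide : ∀ v : V2, v ≠ 0 →
    ((v 1 = v 2 ∧ ¬ inS v ∧ ¬ v = ![0,1,1,0]) ↔ inCh v)) v hv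

lemma orbit_C (p : ℙ (ZMod 2) V2) (hp : p ∈ twistedCubic2) : pointOrbit2 p = twistedCubic2 := by
  obtain ⟨v, hv, rfl⟩ := exists_rep' p
  have hvS := (mem_C_mk v hv).1 hp
  obtain ⟨g0, hg0, hact0⟩ := reach_C v hv hvS
  apply Set.Subset.antisymm
  · intro r hr
    rw [mem_orbit] at hr
    obtain ⟨g, hg, rfl⟩ := hr
    rw [act_mk]
    exact (mem_C_mk _ _).2 (stab_inS hg v hvS)
  · intro r hr
    obtain ⟨w, hw, rfl⟩ := exists_rep' r
    obtain ⟨g1, hg1, hact1⟩ := reach_C w hw ((mem_C_mk w hw).1 hr)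
    rw [← hact0, orbit_congr hg0, mem_orbit]
    exact ⟨g1, hg1, hact1⟩

lemma orbit_out (p : ℙ (ZMod 2) V2) (hp : ¬ inPlane12 p) :
    pointOrbit2 p = {p' | ¬ inPlane12 p'} := by
  obtain ⟨v, hv, rfl⟩ := exists_rep' p
  rw [inPlane_mk] at hp
  obtain ⟨g0, hg0, hact0⟩ := reach_out v hv hp
  apply Set.Subset.antisymm
  · intro r hr
    rw [mem_orbit] at hr
    obtain ⟨g, hg, rfl⟩ := hr
    rw [act_mk, Set.mem_setOf_eq, inPlane_mk]
    have := f_pres' hg v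
    exact fun hc => hp ((by decide : ∀ a b c d : ZMod 2,
      a + b = c + d → a = b → c = d) _ _ _ _ this hc)
  · intro r hr
    obtain ⟨w, hw, rfl⟩ := exists_rep' r
    rw [Set.mem_setOf_eq, inPlane_mk] at hr
    obtain ⟨g1, hg1, hact1⟩ := reach_out w hw hr
    rw [← hact0, orbit_congr hg0, mem_orbit]
    exact ⟨g1, hg1, hact1⟩

lemma orbit_pt : pointOrbit2 pt0110 = {pt0110} := by
  apply Set.Subset.antisymm
  · intro r hr
    rw [mem_orbit] at hr
    obtain ⟨g, hg, rfl⟩ := hr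
    show act g (Projectivization.mk (ZMod 2) ![0,1,1,0] (by decide)) ∈ _
    rw [act_mk, Set.mem_singleton_iff]
    show _ = Projectivization.mk (ZMod 2) ![0,1,1,0] (by decide)
    rw [mkk]
    exact stab_sum hg
  · intro r hr
    rw [Set.mem_singleton_iff] at hr
    subst hr
    exact ⟨LinearEquiv.refl _ _, stab_refl, act_refl _⟩

lemma orbit_chord (p : ℙ (ZMod 2) V2)
    (hp : inPlane12 p ∧ p ∉ twistedCubic2 ∧ p ≠ pt0110) :
    pointOrbit2 p = {p' | inPlane12 p' ∧ p' ∉ twistedCubic2 ∧ p' ≠ pt0110} := by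
  obtain ⟨v, hv, rfl⟩ := exists_rep' p
  have hvC := (chord_mk v hv).1 hp
  obtain ⟨g0, hg0, hact0⟩ := reach_chord v hv hvC
  apply Set.Subset.antisymm
  · intro r hr
    rw [mem_orbit] at hr
    obtain ⟨g, hg, rfl⟩ := hr
    rw [act_mk]
    exact (chord_mk _ _).2 (stab_chord hg v hvC)
  · intro r hr
    obtain ⟨w, hw, rfl⟩ := exists_rep' r
    obtain ⟨g1, hg1, hact1⟩ := reach_chord w hw ((chord_mk w hw).1 hr)
    rw [← hact0, orbit_congr hg0, mem_orbit]
    exact ⟨g1, hg1, hact1⟩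

/- cardinalities -/

lemma pt_in_C : Projectivization.mk (ZMod 2) ![0,0,0,1] (by decide) ∈ twistedCubic2 :=
  (mem_C_mk _ _).2 (Or.inl rfl)

lemma card_C : twistedCubic2.ncard = 3 := by
  rw [twistedCubic2]
  rw [Set.ncard_insert_of_notMem (by
    simp only [Set.mem_insert_iff, Set.mem_singleton_iff, mkk]; decide)]
  rw [Set.ncard_insert_of_notMem (by
    simp only [Set.mem_singleton_iff, mkk]; decide)]
  rw [Set.ncard_singleton]

lemma out_eq : {p' : ℙ (ZMod 2) V2 | ¬ inPlane12 p'} =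
    {Projectivization.mk (ZMod 2) ![0,1,0,0] (by decide),
     Projectivization.mk (ZMod 2) ![0,0,1,0] (by decide),
     Projectivization.mk (ZMod 2) ![1,1,0,0] (by decide),
     Projectivization.mk (ZMod 2) ![1,0,1,0] (by decide),
     Projectivization.mk (ZMod 2) ![0,1,0,1] (by decide),
     Projectivization.mk (ZMod 2) ![0,0,1,1] (by decide),
     Projectivization.mk (ZMod 2) ![1,1,0,1] (by decide),
     Projectivization.mk (ZMod 2) ![1,0,1,1] (by decide)} := by
  ext p
  obtain ⟨v, hv, rfl⟩ := exists_rep' p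
  simp only [Set.mem_setOf_eq, inPlane_mk, Set.mem_insert_iff, Set.mem_singleton_iff, mkk]
  exact (by decide : ∀ v : V2, v ≠ 0 → (¬ v 1 = v 2 ↔
    (v = ![0,1,0,0] ∨ v = ![0,0,1,0] ∨ v = ![1,1,0,0] ∨ v = ![1,0,1,0] ∨
     v = ![0,1,0,1] ∨ v = ![0,0,1,1] ∨ v = ![1,1,0,1] ∨ v = ![1,0,1,1]))) v hv

lemma card_out : {p' : ℙ (ZMod 2) V2 | ¬ inPlane12 p'}.ncard = 8 := by
  rw [out_eq]
  rw [Set.ncard_insert_of_notMem (by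
    simp only [Set.mem_insert_iff, Set.mem_singleton_iff, mkk]; decide)]
  rw [Set.ncard_insert_of_notMem (by
    simp only [Set.mem_insert_iff, Set.mem_singleton_iff, mkk]; decide)]
  rw [Set.ncard_insert_of_notMem (by
    simp only [Set.mem_insert_iff, Set.mem_singleton_iff, mkk]; decide)]
  rw [Set.ncard_insert_of_notMem (by
    simp only [Set.mem_insert_iff, Set.mem_singleton_iff, mkk]; decide)]
  rw [Set.ncard_insert_of_notMem (by
    simp only [Set.mem_insert_iff, Set.mem_singleton_iff, mkk]; decide)]
  rw [Set.ncard_insert_of_notMem (by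
    simp only [Set.mem_insert_iff, Set.mem_singleton_iff, mkk]; decide)]
  rw [Set.ncard_insert_of_notMem (by
    simp only [Set.mem_singleton_iff, mkk]; decide)]
  rw [Set.ncard_singleton]

lemma chord_eq : {p' : ℙ (ZMod 2) V2 | inPlane12 p' ∧ p' ∉ twistedCubic2 ∧ p' ≠ pt0110} =
    {Projectivization.mk (ZMod 2) ![1,1,1,0] (by decide),
     Projectivization.mk (ZMod 2) ![1,0,0,1] (by decide),
     Projectivization.mk (ZMod 2) ![0,1,1,1] (by decide)} := by
  ext p
  obtain ⟨v, hv, rfl⟩ := exists_rep' p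
  rw [Set.mem_setOf_eq, chord_mk]
  simp only [Set.mem_insert_iff, Set.mem_singleton_iff, mkk]

lemma card_chord :
    {p' : ℙ (ZMod 2) V2 | inPlane12 p' ∧ p' ∉ twistedCubic2 ∧ p' ≠ pt0110}.ncard = 3 := by
  rw [chord_eq]
  rw [Set.ncard_insert_of_notMem (by
    simp only [Set.mem_insert_iff, Set.mem_singleton_iff, mkk]; decide)]
  rw [Set.ncard_insert_of_notMem (by
    simp only [Set.mem_singleton_iff, mkk]; decide)]
  rw [Set.ncard_singleton]

end PG32Aux

/-- In `PG(3,2)`, under the full stabilizer `G₂` of the twisted cubic `C`, there are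
exactly `4` orbits of points, of sizes `3, 8, 1, 3`: the points of `C`; the `8` points
outside the plane `x₁ = x₂`; the single point `(0:1:1:0)`; and the `3` remaining
points of the plane `x₁ = x₂` (which lie on chords of `C`). -/
theorem point_orbits_PG32 :
    (∃ p, pointOrbit2 p = twistedCubic2) ∧
    (∃ p, pointOrbit2 p = {p' | ¬ inPlane12 p'}) ∧
    (∃ p, pointOrbit2 p = {pt0110}) ∧
    (∃ p, pointOrbit2 p =
      {p' | inPlane12 p' ∧ p' ∉ twistedCubic2 ∧ p' ≠ pt0110}) ∧
    twistedCubic2.ncard = 3 ∧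
    {p' : ℙ (ZMod 2) (Fin 4 → ZMod 2) | ¬ inPlane12 p'}.ncard = 8 ∧
    ({pt0110} : Set (ℙ (ZMod 2) (Fin 4 → ZMod 2))).ncard = 1 ∧
    {p' | inPlane12 p' ∧ p' ∉ twistedCubic2 ∧ p' ≠ pt0110}.ncard = 3 ∧
    ∀ p, pointOrbit2 p ∈
      ({twistedCubic2, {p' | ¬ inPlane12 p'}, {pt0110},
        {p' | inPlane12 p' ∧ p' ∉ twistedCubic2 ∧ p' ≠ pt0110}} :
        Set (Set (ℙ (ZMod 2) (Fin 4 → ZMod 2)))) := by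
  open PG32Aux in
  refine ⟨⟨_, orbit_C _ pt_in_C⟩,
    ⟨Projectivization.mk (ZMod 2) ![0,1,0,0] (by decide), orbit_out _ (by
      rw [inPlane_mk]; decide)⟩,
    ⟨pt0110, orbit_pt⟩,
    ⟨Projectivization.mk (ZMod 2) ![1,1,1,0] (by decide), orbit_chord _ ((chord_mk _ _).2
      (Or.inl rfl))⟩,
    card_C, card_out, Set.ncard_singleton _, card_chord, ?_⟩
  intro p
  obtain ⟨v, hv, rfl⟩ := PG32Aux.exists_rep' p
  rcases (by decide : ∀ v : PG32Aux.V2, v ≠ 0 →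
      (PG32Aux.inS v ∨ ¬ v 1 = v 2 ∨ v = ![0,1,1,0] ∨
        (v 1 = v 2 ∧ ¬ PG32Aux.inS v ∧ ¬ v = ![0,1,1,0]))) v hv with h | h | h | h
  · rw [orbit_C _ ((mem_C_mk v hv).2 h)]
    exact Set.mem_insert _ _
  · rw [orbit_out _ (by rw [inPlane_mk]; exact h)]
    exact Set.mem_insert_of_mem _ (Set.mem_insert _ _)
  · subst h
    rw [show Projectivization.mk (ZMod 2) ![0,1,1,0] hv = pt0110 from rfl, orbit_pt]
    exact Set.mem_insert_of_mem _ (Set.mem_insert_of_mem _ (Set.mem_insert _ _))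
  · rw [orbit_chord _ (by
      rw [inPlane_mk, mem_C_mk, pt0110, Ne, mkk]; exact h)]
    exact Set.mem_insert_of_mem _ (Set.mem_insert_of_mem _ (Set.mem_insert_of_mem _ rfl))
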